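/- Let y, γ ∈ ℝ, v > 0, β > 0, λ ∈ ℝ, and define α(o) = log(exp(o) + 1) + 1. Let L(o) = (1/2)·log(π/v) − α(o)·log(Ω) + (α(o) + 1/2)·log((y − γ)²·v + Ω) + log(Real.Gamma(α(o))) − log(Real.Gamma(α(o) + 1/2)) with Ω = 2β(1 + v), and let R(o) = |y − γ|·(2v + α(o)). Then the derivative of the total ERN loss o ↦ L(o) + λ·R(o) tends to 0 as o → −∞. -/

import Mathlib

/-!
The loss is `F ∘ softplusAlpha` for a function `F` that is `C¹` near `α = 1` (`log Γ` is smooth on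
`(0, ∞)`). By the chain rule its derivative is `F'(α(o)) · σ(o)` with `σ(o) = eᵒ / (eᵒ + 1)` the
logistic function; as `o → -∞`, `F'(α(o)) → F'(1)` while `σ(o) → 0`.
-/

open Real Filter

/-- SoftPlus activation plus one. -/
noncomputable def softplusAlpha (o : ℝ) : ℝ := Real.log (Real.exp o + 1) + 1

open Topology

@[fun_prop]
theorem Real.contDiffAt_Gamma {x : ℝ} (hx : 0 < x) {n : WithTop ℕ∞} :
    ContDiffAt ℝ n Gamma x := by
  have hdiff : DifferentiableOn ℂ Complex.Gamma {z | 0 < z.re} := fun z hz =>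
    (Complex.differentiableAt_Gamma z fun m h => by
      simp only [Set.mem_ofPred_eq, h, Complex.neg_re, Complex.natCast_re] at hz
      linarith [m.cast_nonneg (α := ℝ)]).differentiableWithinAt
  have hΓ : ContDiffAt ℂ n Complex.Gamma x :=
    (hdiff.analyticAt ((isOpen_lt continuous_const Complex.continuous_re).mem_nhds
      (by simpa using hx))).contDiffAt
  have : Gamma = fun t : ℝ => (Complex.Gamma (Complex.ofRealCLM t)).re := by
    ext t; simp [Complex.Gamma_ofReal]
  rw [this]
  exact Complex.reCLM.contDiff.contDiffAt.comp x
    (hΓ.restrict_scalars ℝ |>.comp x Complex.ofRealCLM.contDiff.contDiffAt)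

theorem hasDerivAt_softplusAlpha (o : ℝ) :
    HasDerivAt softplusAlpha (exp o / (exp o + 1)) o :=
  (((hasDerivAt_exp o).add_const 1).log (by positivity)).add_const 1

theorem tendsto_softplusAlpha_atBot : Tendsto softplusAlpha atBot (𝓝 1) := by
  have hcont : ContinuousAt (fun t => log (t + 1) + 1) 0 := by
    fun_prop (disch := norm_num)
  have h := hcont.tendsto.comp tendsto_exp_atBot
  rwa [zero_add, log_one, zero_add] at h

theorem tendsto_exp_div_exp_add_one_atBot :
    Tendsto (fun o => exp o / (exp o + 1)) atBot (𝓝 0) := by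
  have h := tendsto_exp_atBot.div (tendsto_exp_atBot.add_const 1) (by norm_num)
  rwa [zero_div] at h

theorem ContDiffAt.continuousAt_deriv {𝕜 E : Type*} [NontriviallyNormedField 𝕜]
    [NormedAddCommGroup E] [NormedSpace 𝕜 E] {f : 𝕜 → E} {x : 𝕜} {n : WithTop ℕ∞}
    (hf : ContDiffAt 𝕜 n f x) (hn : n ≠ 0) : ContinuousAt (deriv f) x :=
  (hf.continuousAt_fderiv hn).clm_apply continuousAt_const

theorem tendsto_deriv_comp_softplusAlpha_atBot {F : ℝ → ℝ} (hF : ContDiffAt ℝ 1 F 1) :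
    Tendsto (deriv fun o => F (softplusAlpha o)) atBot (𝓝 0) := by
  have hderiv : ∀ᶠ o in atBot, deriv (fun o => F (softplusAlpha o)) o
      = deriv F (softplusAlpha o) * (exp o / (exp o + 1)) := by
    filter_upwards [tendsto_softplusAlpha_atBot.eventually (hF.eventually (by simp))] with o ho
    exact (ho.differentiableAt_one.hasDerivAt.comp o (hasDerivAt_softplusAlpha o)).deriv
  rw [tendsto_congr' hderiv, ← mul_zero (deriv F 1)]
  exact ((hF.continuousAt_deriv one_ne_zero).tendsto.comp tendsto_softplusAlpha_atBot).mul
    tendsto_exp_div_exp_add_one_atBot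

theorem stmt_3_general (y γ v β lam : ℝ) :
    Tendsto
      (deriv (fun o : ℝ =>
        ((1 / 2) * Real.log (Real.pi / v)
          - softplusAlpha o * Real.log (2 * β * (1 + v))
          + (softplusAlpha o + 1 / 2) * Real.log ((y - γ) ^ 2 * v + 2 * β * (1 + v))
          + Real.log (Real.Gamma (softplusAlpha o))
          - Real.log (Real.Gamma (softplusAlpha o + 1 / 2)))
        + lam * (|y - γ| * (2 * v + softplusAlpha o))))
      atBot (nhds 0) := by
  refine tendsto_deriv_comp_softplusAlpha_atBot (F := fun a =>
    ((1 / 2) * log (π / v) - a * log (2 * β * (1 + v))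
      + (a + 1 / 2) * log ((y - γ) ^ 2 * v + 2 * β * (1 + v))
      + log (Gamma a) - log (Gamma (a + 1 / 2))) + lam * (|y - γ| * (2 * v + a))) ?_
  fun_prop (disch := positivity)

theorem stmt_3 (y γ v β lam : ℝ) (hv : 0 < v) (hβ : 0 < β) :
    Tendsto
      (deriv (fun o : ℝ =>
        ((1 / 2) * Real.log (Real.pi / v)
          - softplusAlpha o * Real.log (2 * β * (1 + v))
          + (softplusAlpha o + 1 / 2) * Real.log ((y - γ) ^ 2 * v + 2 * β * (1 + v))
          + Real.log (Real.Gamma (softplusAlpha o))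
          - Real.log (Real.Gamma (softplusAlpha o + 1 / 2)))
        + lam * (|y - γ| * (2 * v + softplusAlpha o))))
      atBot (nhds 0) :=
  stmt_3_general y γ v β lam
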